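/- Eigenvalue repulsion, Neumann case: for any two distinct eigenvalues E_i ≠ E_j of the Neumann Hamiltonian H, one has |E_i − E_j| ≥ π(η(W)^{−1} − 1)/(η(W)^{−N} − 1). -/

import Mathlib

/-!
Normalised by their first entries, the two eigenvectors become the shooting solutions `u`, `v`
of `u (k + 1) = (E - ε k) u k - u (k - 1)` with `u (-1) = u 0 = 1`. The difference `d = v - u`
solves the `E₂`-recurrence with source `(E₂ - E₁) u`; as Gershgorin gives `|E₂ - ε k| ≤ W + 2`,
a discrete Duhamel formula bounds `|d k|` by `|E₂ - E₁| ∑ⱼ F (k - j) |u j|`, where `F` are the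
Fibonacci polynomials at `W + 2`. Orthogonality of the eigenvectors gives `∑ u² = -∑ u d`, and a
Schur test turns this into `1 ≤ |E₁ - E₂| ∑_{m < N} F m`. Finally `π F m ≤ ν ^ m` for `m ≥ 2`,
where `ν = 1 / qform (W + 1) φ ≤ 1 / η(W)` for a suitable `φ`, and summing the geometric series
gives the bound.
-/

/-- The quadratic form `q(x, φ) = 1 − 2x sin φ cos φ + x² sin² φ`. -/
noncomputable def qform (x φ : ℝ) : ℝ :=
  1 - 2 * x * Real.sin φ * Real.cos φ + x ^ 2 * Real.sin φ ^ 2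

/-- `η(W) = min { q(x, φ) : |x| ≤ W + 1, 0 ≤ φ ≤ π }`. -/
noncomputable def eta (W : ℝ) : ℝ :=
  sInf ((fun p : ℝ × ℝ => qform p.1 p.2) '' (Set.Icc (-(W + 1)) (W + 1) ×ˢ Set.Icc 0 Real.pi))

/-- The Neumann Hamiltonian: the `N × N` symmetric tridiagonal matrix with off-diagonal
entries `1`, diagonal entries `ε_n` for interior sites, and corner diagonal entries
augmented by `1` (coming from the boundary conditions `u_0 = u_1`, `u_{N+1} = u_N`). -/
def neumannH (N : ℕ) (ε : Fin N → ℝ) : Matrix (Fin N) (Fin N) ℝ :=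
  fun i j =>
    if i = j then
      ε i + (if i.val = 0 then 1 else 0) + (if i.val = N - 1 then 1 else 0)
    else if i.val + 1 = j.val ∨ j.val + 1 = i.val then 1 else 0

open Finset Matrix

lemma schur_test {ι : Type*} (s : Finset ι) (K : ι → ι → ℝ) (hK : ∀ i j, 0 ≤ K i j) {S : ℝ}
    (hrow : ∀ i ∈ s, ∑ j ∈ s, K i j ≤ S) (hcol : ∀ j ∈ s, ∑ i ∈ s, K i j ≤ S) (x : ι → ℝ) :
    ∑ i ∈ s, ∑ j ∈ s, K i j * (x i * x j) ≤ S * ∑ i ∈ s, x i ^ 2 := by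
  calc ∑ i ∈ s, ∑ j ∈ s, K i j * (x i * x j)
      ≤ ∑ i ∈ s, ∑ j ∈ s, (K i j * x i ^ 2 / 2 + K i j * x j ^ 2 / 2) := by
        gcongr with i _ j _
        nlinarith [hK i j, mul_nonneg (hK i j) (sq_nonneg (x i - x j))]
    _ = ∑ i ∈ s, (∑ j ∈ s, K i j) * x i ^ 2 / 2 + ∑ j ∈ s, (∑ i ∈ s, K i j) * x j ^ 2 / 2 := by
        simp only [sum_add_distrib, sum_mul, sum_div]
        exact congrArg _ sum_comm
    _ ≤ ∑ i ∈ s, S * x i ^ 2 / 2 + ∑ j ∈ s, S * x j ^ 2 / 2 := by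
        gcongr with i hi j hj
        · exact hrow i hi
        · exact hcol j hj
    _ = S * ∑ i ∈ s, x i ^ 2 := by rw [← sum_add_distrib, mul_sum]; congr 1 with i; ring

lemma Matrix.IsSymm.dotProduct_eq_zero_of_mulVec_eq_smul {n R : Type*} [Fintype n] [CommRing R]
    [IsDomain R] {A : Matrix n n R} (hA : A.IsSymm) {μ ν : R} {v w : n → R}
    (hv : A *ᵥ v = μ • v) (hw : A *ᵥ w = ν • w) (hμν : μ ≠ ν) : v ⬝ᵥ w = 0 := by
  have h : μ * (v ⬝ᵥ w) = ν * (v ⬝ᵥ w) :=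
    calc μ * (v ⬝ᵥ w) = (A *ᵥ v) ⬝ᵥ w := by rw [hv, smul_dotProduct, smul_eq_mul]
      _ = v ⬝ᵥ (A *ᵥ w) := by rw [← Matrix.vecMul_transpose, hA.eq, Matrix.dotProduct_mulVec]
      _ = ν * (v ⬝ᵥ w) := by rw [hw, dotProduct_smul, smul_eq_mul]
  exact (mul_eq_mul_right_iff.1 h).resolve_left hμν

def fibPoly (x : ℝ) : ℕ → ℝ
  | 0 => 0
  | 1 => 1
  | n + 2 => x * fibPoly x (n + 1) + fibPoly x n

namespace fibPoly

variable {x : ℝ}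

@[simp] lemma zero : fibPoly x 0 = 0 := rfl

@[simp] lemma one : fibPoly x 1 = 1 := rfl

lemma add_two (n : ℕ) : fibPoly x (n + 2) = x * fibPoly x (n + 1) + fibPoly x n := rfl

lemma nonneg (hx : 0 ≤ x) (n : ℕ) : 0 ≤ fibPoly x n := by
  induction n using Nat.twoStepInduction with
  | zero => rfl
  | one => exact zero_le_one
  | more n ih₀ ih₁ => rw [add_two]; positivity

/-- Terms `j ≥ k` vanish because `k - j = 0` and `fibPoly x 0 = 0`. -/
lemma sum_range_sub_mul_of_le (c : ℕ → ℝ) {k n : ℕ} (hkn : k ≤ n) :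
    ∑ j ∈ range n, fibPoly x (k - j) * c j = ∑ j ∈ range k, fibPoly x (k - j) * c j := by
  refine (sum_subset (range_subset_range.2 hkn) fun j _ hj => ?_).symm
  rw [Nat.sub_eq_zero_of_le (not_lt.1 (mem_range.not.1 hj)), zero, zero_mul]

lemma conv_succ (c : ℕ → ℝ) (m : ℕ) :
    ∑ j ∈ range (m + 1), fibPoly x (m + 1 - j) * c j =
      x * ∑ j ∈ range m, fibPoly x (m - j) * c j
        + ∑ j ∈ range (m - 1), fibPoly x (m - 1 - j) * c j + c m := by
  rw [sum_range_succ, Nat.add_sub_cancel_left, one, one_mul,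
    ← sum_range_sub_mul_of_le c (Nat.sub_le m 1), mul_sum, ← sum_add_distrib]
  congr 1
  refine sum_congr rfl fun j hj => ?_
  have hj : j < m := mem_range.1 hj
  rw [show m + 1 - j = m - 1 - j + 2 by omega, add_two, show m - 1 - j + 1 = m - j by omega]
  ring

/-- Discrete Duhamel principle: the convolution with `fibPoly x` solves the
inhomogeneous recurrence `D (k + 1) = x D k + D (k - 1) + c k`, `D 0 = 0`. -/
lemma abs_le_conv (hx : 0 ≤ x) {d c : ℕ → ℝ} (hd0 : d 0 = 0)
    (hd : ∀ k, |d (k + 1)| ≤ x * |d k| + |d (k - 1)| + c k) (k : ℕ) :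
    |d k| ≤ ∑ j ∈ range k, fibPoly x (k - j) * c j := by
  induction k using Nat.strong_induction_on with
  | _ k ih =>
    rcases k with _ | m
    · simp [hd0]
    · rw [conv_succ]
      have h₁ := ih m (by omega)
      have h₂ := ih (m - 1) (by omega)
      nlinarith [hd m]

lemma sum_range_const_sub_le (hx : 0 ≤ x) {k n : ℕ} (hk : k < n) :
    ∑ j ∈ range n, fibPoly x (k - j) ≤ ∑ m ∈ range n, fibPoly x m := by
  have h := sum_range_sub_mul_of_le (x := x) (fun _ => 1) hk.le
  have h' := sum_range_sub_mul_of_le (x := x) (fun _ => 1) k.le_succ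
  have hrefl := sum_range_reflect (fibPoly x) (k + 1)
  simp only [mul_one, Nat.add_sub_cancel] at h h' hrefl
  rw [h, ← h', hrefl]
  exact sum_le_sum_of_subset_of_nonneg (range_subset_range.2 hk) fun _ _ _ => nonneg hx _

lemma sum_range_sub_const_le (hx : 0 ≤ x) {j n : ℕ} (hj : j ≤ n) :
    ∑ k ∈ range n, fibPoly x (k - j) ≤ ∑ m ∈ range n, fibPoly x m := by
  rw [← sum_range_add_sum_Ico _ hj, sum_Ico_eq_sum_range,
    sum_eq_zero fun k hk => by rw [Nat.sub_eq_zero_of_le (mem_range.1 hk).le, zero]]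
  simp only [Nat.add_sub_cancel_left, zero_add]
  exact sum_le_sum_of_subset_of_nonneg (range_subset_range.2 (Nat.sub_le n j))
    fun _ _ _ => nonneg hx _

lemma mul_le_pow {x ν c : ℝ} (hx : 0 ≤ x) (hν : 0 ≤ ν) (hxν : x * ν + 1 ≤ ν ^ 2) {k : ℕ}
    (h₀ : c * fibPoly x k ≤ ν ^ k) (h₁ : c * fibPoly x (k + 1) ≤ ν ^ (k + 1)) (n : ℕ) :
    c * fibPoly x (n + k) ≤ ν ^ (n + k) := by
  induction n using Nat.twoStepInduction with
  | zero => simpa using h₀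
  | one => simpa [add_comm] using h₁
  | more n ih₀ ih₁ =>
    rw [show n + 2 + k = n + k + 2 by ring, add_two, pow_add]
    rw [show n + 1 + k = n + k + 1 by ring] at ih₁
    calc c * (x * fibPoly x (n + k + 1) + fibPoly x (n + k))
        = x * (c * fibPoly x (n + k + 1)) + c * fibPoly x (n + k) := by ring
      _ ≤ x * ν ^ (n + k + 1) + ν ^ (n + k) := by gcongr
      _ = ν ^ (n + k) * (x * ν + 1) := by ring
      _ ≤ ν ^ (n + k) * ν ^ 2 := by gcongr

end fibPoly

/-- Solution of `u (k + 1) = (E - V k) u k - u (k - 1)` with the Neumann start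
`u (-1) = u 0 = 1`. -/
def shootingSeq (E : ℝ) (V : ℕ → ℝ) : ℕ → ℝ
  | 0 => 1
  | 1 => E - V 0 - 1
  | n + 2 => (E - V (n + 1)) * shootingSeq E V (n + 1) - shootingSeq E V n

namespace shootingSeq

variable {E : ℝ} {V : ℕ → ℝ}

@[simp] lemma zero : shootingSeq E V 0 = 1 := rfl

/-- The truncated subtraction `k - 1` encodes the Neumann condition at `k = 0`. -/
lemma succ (k : ℕ) :
    shootingSeq E V (k + 1) = (E - V k) * shootingSeq E V k - shootingSeq E V (k - 1) := by
  rcases k with _ | k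
  · show E - V 0 - 1 = (E - V 0) * 1 - 1
    ring
  · rfl

lemma eq_mul_of_recurrence {g : ℕ → ℝ} {n : ℕ}
    (hg : ∀ k < n, g (k + 1) = (E - V k) * g k - g (k - 1)) :
    ∀ k ≤ n, g k = g 0 * shootingSeq E V k := by
  intro k
  induction k using Nat.strong_induction_on with
  | _ k ih =>
    rcases k with _ | m
    · simp
    · intro hm
      rw [hg m (by omega), succ, ih m (by omega) (by omega), ih (m - 1) (by omega) (by omega)]
      ring

lemma abs_sub_le_conv {E' b : ℝ} (hb : ∀ k, |E' - V k| ≤ b) (k : ℕ) :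
    |shootingSeq E' V k - shootingSeq E V k| ≤
      ∑ j ∈ range k, fibPoly b (k - j) * (|E' - E| * |shootingSeq E V j|) := by
  have hb0 : 0 ≤ b := (abs_nonneg _).trans (hb 0)
  refine fibPoly.abs_le_conv (d := fun k => shootingSeq E' V k - shootingSeq E V k) hb0
    (sub_self _) (fun k => ?_) k
  have hrec : shootingSeq E' V (k + 1) - shootingSeq E V (k + 1) =
      (E' - V k) * (shootingSeq E' V k - shootingSeq E V k)
        + -(shootingSeq E' V (k - 1) - shootingSeq E V (k - 1))
        + (E' - E) * shootingSeq E V k := by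
    rw [succ, succ]; ring
  rw [hrec]
  refine (abs_add_three _ _ _).trans ?_
  rw [abs_neg, abs_mul, abs_mul]
  gcongr
  exact hb k

/-- The difference `d = v - u` is driven by `(E' - E) u`, so it is small when `E' - E` is;
but orthogonality gives `∑ u² = -∑ u d`. -/
lemma one_le_abs_sub_mul_sum_fibPoly {E' b : ℝ} {n : ℕ} (hn : 0 < n)
    (hb : ∀ k, |E' - V k| ≤ b)
    (horth : ∑ k ∈ range n, shootingSeq E V k * shootingSeq E' V k = 0) :
    1 ≤ |E' - E| * ∑ m ∈ range n, fibPoly b m := by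
  have hb0 : 0 ≤ b := (abs_nonneg _).trans (hb 0)
  set u := shootingSeq E V
  set d := fun k => shootingSeq E' V k - u k
  set S := ∑ m ∈ range n, fibPoly b m
  have hnorm : 1 ≤ ∑ k ∈ range n, u k ^ 2 := by
    simpa [u] using single_le_sum (f := fun k => u k ^ 2) (fun _ _ => sq_nonneg _)
      (mem_range.2 hn)
  have hd : ∀ k ∈ range n, |d k| ≤
      |E' - E| * ∑ j ∈ range n, fibPoly b (k - j) * |u j| := by
    intro k hk
    rw [fibPoly.sum_range_sub_mul_of_le _ (mem_range.1 hk).le, mul_sum]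
    refine (abs_sub_le_conv hb k).trans_eq (sum_congr rfl fun j _ => ?_)
    ring
  have hschur := schur_test (range n) (fun k j => fibPoly b (k - j))
    (fun _ _ => fibPoly.nonneg hb0 _) (S := S)
    (fun k hk => fibPoly.sum_range_const_sub_le hb0 (mem_range.1 hk))
    (fun j hj => fibPoly.sum_range_sub_const_le hb0 (mem_range.1 hj).le) (fun k => |u k|)
  simp only [sq_abs] at hschur
  have key : ∑ k ∈ range n, u k ^ 2 ≤ (|E' - E| * S) * ∑ k ∈ range n, u k ^ 2 :=
    calc ∑ k ∈ range n, u k ^ 2 = -∑ k ∈ range n, u k * d k := by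
          simp only [d, mul_sub, sum_sub_distrib, horth, sq]; ring
      _ ≤ ∑ k ∈ range n, |u k| * |d k| := by
          refine (neg_le_abs _).trans ((abs_sum_le_sum_abs _ _).trans_eq ?_)
          simp only [abs_mul]
      _ ≤ ∑ k ∈ range n, |u k| * (|E' - E| * ∑ j ∈ range n, fibPoly b (k - j) * |u j|) := by
          gcongr with k hk
          exact hd k hk
      _ = |E' - E| * ∑ k ∈ range n, ∑ j ∈ range n, fibPoly b (k - j) * (|u k| * |u j|) := by
          simp only [mul_sum]
          refine sum_congr rfl fun k _ => sum_congr rfl fun j _ => ?_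
          ring
      _ ≤ (|E' - E| * S) * ∑ k ∈ range n, u k ^ 2 := by
          rw [mul_assoc]; gcongr
  exact (le_mul_iff_one_le_left (zero_lt_one.trans_le hnorm)).1 key

end shootingSeq

namespace neumannH

lemma isSymm (N : ℕ) (ε : Fin N → ℝ) : (neumannH N ε).IsSymm := by
  ext i j
  simp only [Matrix.transpose_apply, neumannH]
  by_cases h : i = j
  · subst h; rfl
  · rw [if_neg (Ne.symm h), if_neg h]
    exact if_congr or_comm rfl rfl

variable {M : ℕ} (ε : Fin (M + 1) → ℝ)

/-- The Neumann condition `u₀ = u₁`, `u_{N+1} = u_N` is encoded by clamping the neighbour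
indices to `[0, M]` (with truncated subtraction at `0`). -/
lemma apply_eq (i j : Fin (M + 1)) :
    neumannH (M + 1) ε i j = (if j = i then ε i else 0)
      + (if j = Fin.clamp (i.val - 1) M then 1 else 0)
      + (if j = Fin.clamp (i.val + 1) M then 1 else 0) := by
  have hi := i.isLt
  have hj := j.isLt
  simp only [neumannH, Fin.ext_iff, Fin.coe_clamp, Nat.add_sub_cancel]
  split_ifs <;> first | omega | ring

lemma mulVec_apply (w : Fin (M + 1) → ℝ) (i : Fin (M + 1)) :
    (neumannH (M + 1) ε *ᵥ w) i =
      w (Fin.clamp (i.val - 1) M) + ε i * w i + w (Fin.clamp (i.val + 1) M) := by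
  simp only [Matrix.mulVec, dotProduct, apply_eq, add_mul, ite_mul, one_mul, zero_mul,
    sum_add_distrib, sum_ite_eq']
  simp only [mem_univ, if_true]
  ring

variable {ε} {E : ℝ} {ψ : Fin (M + 1) → ℝ}

lemma eq_mul_shootingSeq (hψ : neumannH (M + 1) ε *ᵥ ψ = E • ψ) (i : Fin (M + 1)) :
    ψ i = ψ 0 * shootingSeq E (fun k => ε (Fin.clamp k M)) i := by
  have hrec : ∀ k < M, ψ (Fin.clamp (k + 1) M) =
      (E - ε (Fin.clamp k M)) * ψ (Fin.clamp k M) - ψ (Fin.clamp (k - 1) M) := by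
    intro k hk
    have hrow := congrFun hψ (Fin.clamp k M)
    have hk' : (Fin.clamp k M).val = k := by simp [Fin.coe_clamp, hk.le]
    rw [mulVec_apply, hk', Pi.smul_apply, smul_eq_mul] at hrow
    linarith
  have h := shootingSeq.eq_mul_of_recurrence (g := fun k => ψ (Fin.clamp k M)) hrec i i.is_le
  simpa [Fin.clamp, Fin.ext_iff, Nat.le_of_lt_succ i.isLt] using h

lemma exists_abs_sub_le_two (hψ0 : ψ ≠ 0) (hψ : neumannH (M + 1) ε *ᵥ ψ = E • ψ) :
    ∃ i, |E - ε i| ≤ 2 := by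
  obtain ⟨i, hi⟩ := Finite.exists_max fun j => |ψ j|
  have hψi : 0 < |ψ i| := by
    by_contra! h
    exact hψ0 (funext fun j => abs_nonpos_iff.1 ((hi j).trans h))
  have hrow := congrFun hψ i
  rw [mulVec_apply, Pi.smul_apply, smul_eq_mul] at hrow
  refine ⟨i, le_of_mul_le_mul_right ?_ hψi⟩
  set l := Fin.clamp (i.val - 1) M
  set r := Fin.clamp (i.val + 1) M
  calc |E - ε i| * |ψ i| = |ψ l + ψ r| := by rw [← abs_mul]; congr 1; linarith
    _ ≤ |ψ l| + |ψ r| := abs_add_le _ _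
    _ ≤ 2 * |ψ i| := by linarith [hi l, hi r]

lemma sum_shootingSeq_mul_eq_zero {E₁ E₂ : ℝ} {ψ χ : Fin (M + 1) → ℝ} (hψ0 : ψ ≠ 0)
    (hψ : neumannH (M + 1) ε *ᵥ ψ = E₁ • ψ) (hχ0 : χ ≠ 0)
    (hχ : neumannH (M + 1) ε *ᵥ χ = E₂ • χ) (hne : E₁ ≠ E₂) :
    ∑ k ∈ range (M + 1), shootingSeq E₁ (fun k => ε (Fin.clamp k M)) k *
      shootingSeq E₂ (fun k => ε (Fin.clamp k M)) k = 0 := by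
  have hψ00 : ψ 0 ≠ 0 := fun h => hψ0 (funext fun i => by simp [eq_mul_shootingSeq hψ i, h])
  have hχ00 : χ 0 ≠ 0 := fun h => hχ0 (funext fun i => by simp [eq_mul_shootingSeq hχ i, h])
  have hdot := (isSymm _ ε).dotProduct_eq_zero_of_mulVec_eq_smul hψ hχ hne
  rw [dotProduct,
    sum_congr rfl fun i _ => by rw [eq_mul_shootingSeq hψ i, eq_mul_shootingSeq hχ i],
    Fin.sum_univ_eq_sum_range (fun k => ψ 0 * shootingSeq E₁ _ k * (χ 0 * shootingSeq E₂ _ k))]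
    at hdot
  simp_rw [mul_mul_mul_comm, ← mul_sum] at hdot
  exact (mul_eq_zero.1 hdot).resolve_left (mul_ne_zero hψ00 hχ00)

lemma abs_sub_le {W E : ℝ} (hε : ∀ n, ε n ∈ Set.Icc 0 W) {χ : Fin (M + 1) → ℝ} (hχ0 : χ ≠ 0)
    (hχ : neumannH (M + 1) ε *ᵥ χ = E • χ) (j : Fin (M + 1)) : |E - ε j| ≤ W + 2 := by
  obtain ⟨i, hi⟩ := exists_abs_sub_le_two hχ0 hχ
  obtain ⟨hi₀, hi₁⟩ := hε i
  obtain ⟨hj₀, hj₁⟩ := hε j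
  rw [abs_le] at hi ⊢
  constructor <;> linarith

end neumannH

lemma qform_eq_sq_add_sq (x φ : ℝ) :
    qform x φ = (Real.cos φ - x * Real.sin φ) ^ 2 + Real.sin φ ^ 2 := by
  unfold qform; linear_combination -Real.sin_sq_add_cos_sq φ

lemma qform_pos (x φ : ℝ) : 0 < qform x φ := by
  rw [qform_eq_sq_add_sq]
  rcases eq_or_ne (Real.sin φ) 0 with h | h
  · have := Real.sin_sq_add_cos_sq φ
    rw [h] at this ⊢
    nlinarith
  · positivity

lemma qform_eq_double_angle (x φ : ℝ) :
    qform x φ = 1 + x ^ 2 / 2 - x * Real.sin (2 * φ) - x ^ 2 / 2 * Real.cos (2 * φ) := by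
  rw [Real.sin_two_mul, Real.cos_two_mul]
  unfold qform; linear_combination x ^ 2 * Real.sin_sq_add_cos_sq φ

/-- The maximum over `θ` of `a sin θ + (a² / 2) cos θ` is `a √(a² + 4) / 2`, attained at
`cos θ = a / √(a² + 4)`. -/
lemma qform_half_arccos {a : ℝ} (ha : 0 ≤ a) :
    qform a (Real.arccos (a / √(a ^ 2 + 4)) / 2) = 1 + a ^ 2 / 2 - a * √(a ^ 2 + 4) / 2 := by
  set s := √(a ^ 2 + 4)
  have hs : s ^ 2 = a ^ 2 + 4 := Real.sq_sqrt (by positivity)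
  have hs0 : 0 < s := by positivity
  have has : a / s ≤ 1 := (div_le_one hs0).2 (by nlinarith)
  have hcos : Real.cos (Real.arccos (a / s)) = a / s := Real.cos_arccos (by
    have : 0 ≤ a / s := by positivity
    linarith) has
  have hsin : Real.sin (Real.arccos (a / s)) = 2 / s := by
    rw [Real.sin_arccos, show 1 - (a / s) ^ 2 = (2 / s) ^ 2 by field_simp; linarith,
      Real.sqrt_sq (by positivity)]
  rw [qform_eq_double_angle, mul_div_cancel₀ _ two_ne_zero, hcos, hsin]
  field_simp
  linear_combination a * hs

lemma eta_le_qform {W x φ : ℝ} (hx : x ∈ Set.Icc (-(W + 1)) (W + 1))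
    (hφ : φ ∈ Set.Icc 0 Real.pi) : eta W ≤ qform x φ :=
  csInf_le ⟨0, by rintro _ ⟨p, -, rfl⟩; exact (qform_pos p.1 p.2).le⟩ ⟨(x, φ), ⟨hx, hφ⟩, rfl⟩

lemma eta_pos {W : ℝ} (hW : -1 ≤ W) : 0 < eta W := by
  have hK : IsCompact ((fun p : ℝ × ℝ => qform p.1 p.2) ''
      (Set.Icc (-(W + 1)) (W + 1) ×ˢ Set.Icc 0 Real.pi)) :=
    (isCompact_Icc.prod isCompact_Icc).image (by unfold qform; fun_prop)
  obtain ⟨p, -, hp⟩ := hK.sInf_mem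
    ⟨_, (0, 0), ⟨⟨by linarith, by linarith⟩, le_rfl, Real.pi_pos.le⟩, rfl⟩
  rw [eta, ← hp]
  exact qform_pos p.1 p.2

lemma le_inv_eta {W : ℝ} (hW : 0 ≤ W) :
    1 + (W + 1) ^ 2 / 2 + (W + 1) * √((W + 1) ^ 2 + 4) / 2 ≤ (eta W)⁻¹ := by
  set a := W + 1
  set s := √(a ^ 2 + 4)
  have ha : 0 ≤ a := by positivity
  have hs : s ^ 2 = a ^ 2 + 4 := Real.sq_sqrt (by positivity)
  have hmul : (1 + a ^ 2 / 2 - a * s / 2) * (1 + a ^ 2 / 2 + a * s / 2) = 1 := by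
    linear_combination (-a ^ 2 / 4) * hs
  have hη : eta W ≤ 1 + a ^ 2 / 2 - a * s / 2 := by
    rw [← qform_half_arccos ha]
    refine eta_le_qform ⟨by linarith, le_rfl⟩ ⟨div_nonneg (Real.arccos_nonneg _) zero_le_two, ?_⟩
    linarith [Real.arccos_le_pi (a / s), Real.pi_pos]
  rw [eq_inv_of_mul_eq_one_right hmul]
  exact inv_anti₀ (eta_pos (by linarith)) hη

/-- Here `ν = 1 + a² / 2 + a s / 2` is `1 / qform a φ` at the minimising angle `φ`. -/
lemma pi_mul_sum_fibPoly_le {a s : ℝ} (ha : 1 ≤ a) (hs0 : 0 ≤ s) (hs : s ^ 2 = a ^ 2 + 4)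
    (n : ℕ) : Real.pi * ∑ m ∈ range n, fibPoly (a + 1) m ≤
      ∑ m ∈ range n, (1 + a ^ 2 / 2 + a * s / 2) ^ m := by
  set ν := 1 + a ^ 2 / 2 + a * s / 2 with hν_def
  have hπ := Real.pi_lt_d2
  have hs2 : 2 ≤ s := by nlinarith
  have hν : 1 + a + a ^ 2 / 2 ≤ ν := by nlinarith
  have hν52 : 5 / 2 ≤ ν := by nlinarith
  have hν2 : 1 + 2 * a + 2 * a ^ 2 + a ^ 3 + a ^ 4 / 2 ≤ ν ^ 2 := by
    have hexp : ν ^ 2 = 1 + 2 * a ^ 2 + a ^ 4 / 2 + a * s + a ^ 3 * s / 2 := by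
      linear_combination a ^ 2 / 4 * hs
    nlinarith [pow_pos (by linarith : (0 : ℝ) < a) 3]
  have hstep : (a + 1) * ν + 1 ≤ ν ^ 2 := by nlinarith
  have hF₂ : fibPoly (a + 1) 2 = a + 1 := by simp [fibPoly]
  have hF₃ : fibPoly (a + 1) 3 = (a + 1) ^ 2 + 1 := by simp [fibPoly]; ring
  have h₂ : Real.pi * fibPoly (a + 1) 2 ≤ ν ^ 2 := by
    have : (3.15 : ℝ) * (a + 1) ≤ 1 + 2 * a + 2 * a ^ 2 + a ^ 3 + a ^ 4 / 2 := by
      nlinarith [mul_nonneg (sub_nonneg.2 ha) (sub_nonneg.2 ha), pow_le_pow_left₀ zero_le_one ha 3]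
    rw [hF₂]
    nlinarith
  have h₃ : Real.pi * fibPoly (a + 1) 3 ≤ ν ^ 3 :=
    calc Real.pi * fibPoly (a + 1) 3 ≤ Real.pi * fibPoly (a + 1) 2 * ν := by
          rw [hF₃, hF₂, mul_assoc]; gcongr; nlinarith
      _ ≤ ν ^ 2 * ν := by gcongr
      _ = ν ^ 3 := by ring
  have hF := fibPoly.mul_le_pow (by linarith) (by linarith) hstep h₂ h₃
  rcases n with _ | _ | n
  · simp
  · simp
  induction n with
  | zero => simp [sum_range_succ]; linarith
  | succ n ih =>
    rw [sum_range_succ, sum_range_succ _ (n + 2), mul_add]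
    exact add_le_add ih (hF n)

lemma pi_mul_div_pow_sub_one_le {n : ℕ} {ν t S δ : ℝ} (hν : 1 < ν) (hνt : ν ≤ t) (hδ : 0 ≤ δ)
    (hδS : 1 ≤ δ * S) (hS : Real.pi * S ≤ ∑ m ∈ range n, ν ^ m) :
    Real.pi * (t - 1) / (t ^ n - 1) ≤ δ := by
  have hS0 : 0 < S := pos_of_mul_pos_right (one_pos.trans_le hδS) hδ
  have hgeom : Real.pi * S ≤ ∑ m ∈ range n, t ^ m :=
    hS.trans (sum_le_sum fun m _ => pow_le_pow_left₀ (by linarith) hνt m)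
  calc Real.pi * (t - 1) / (t ^ n - 1) = Real.pi / ∑ m ∈ range n, t ^ m := by
        rw [← geom_sum_mul, mul_div_mul_right _ _ (sub_ne_zero.2 (hν.trans_le hνt).ne')]
    _ ≤ Real.pi / (Real.pi * S) := by gcongr
    _ = S⁻¹ := div_mul_cancel_left₀ Real.pi_pos.ne' S
    _ ≤ δ := by rwa [inv_le_iff_one_le_mul₀ hS0]

/-- **Eigenvalue repulsion, Neumann case**: any two distinct eigenvalues of the
Neumann Hamiltonian with potential values in `[0, W]` satisfy
`|E₁ − E₂| ≥ π (η(W)⁻¹ − 1) / (η(W)⁻ᴺ − 1)`. -/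
theorem eigenvalue_repulsion_neumann
    (N : ℕ) (hN : 1 ≤ N) (W : ℝ) (hW : 0 ≤ W)
    (ε : Fin N → ℝ) (hε : ∀ n, ε n ∈ Set.Icc 0 W)
    (E₁ E₂ : ℝ)
    (h₁ : ∃ v : Fin N → ℝ, v ≠ 0 ∧ (neumannH N ε).mulVec v = E₁ • v)
    (h₂ : ∃ v : Fin N → ℝ, v ≠ 0 ∧ (neumannH N ε).mulVec v = E₂ • v)
    (hne : E₁ ≠ E₂) :
    Real.pi * ((eta W)⁻¹ - 1) / ((eta W)⁻¹ ^ N - 1) ≤ |E₁ - E₂| := by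
  obtain ⟨M, rfl⟩ := Nat.exists_eq_add_of_le' hN
  obtain ⟨ψ, hψ0, hψ⟩ := h₁
  obtain ⟨χ, hχ0, hχ⟩ := h₂
  have horth := neumannH.sum_shootingSeq_mul_eq_zero hψ0 hψ hχ0 hχ hne
  have hb (k : ℕ) : |E₂ - ε (Fin.clamp k M)| ≤ W + 1 + 1 :=
    (neumannH.abs_sub_le hε hχ0 hχ _).trans_eq (by ring)
  have hrep := shootingSeq.one_le_abs_sub_mul_sum_fibPoly (Nat.succ_pos M) hb horth
  rw [abs_sub_comm] at hrep
  have hs := Real.sq_sqrt (by positivity : (0 : ℝ) ≤ (W + 1) ^ 2 + 4)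
  exact pi_mul_div_pow_sub_one_le (by nlinarith [Real.sqrt_nonneg ((W + 1) ^ 2 + 4)])
    (le_inv_eta hW) (abs_nonneg _) hrep
    (pi_mul_sum_fibPoly_le (by linarith) (Real.sqrt_nonneg _) hs (M + 1))
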